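/- arXiv:1504.08248 — 4 statements merged into one kernel-verified Lean document; each statement's English description precedes it below -/
import Mathlib

section
/- For the plurality voting rule in weighted elections, bribery restricted to vulnerable votes is solved by the greedy strategy: p can be made the winner by changing only vulnerable votes if and only if p wins after every vulnerable vote is replaced by a vote ranking p first. Formally: if there exists any assignment of new rankings to the vulnerable votes making p win, then the assignment placing p first in every vulnerable vote also makes p win. -/
/-! Placing `p` first in every vulnerable vote gives `p` the whole vulnerable weight, which is at
least what `p` gets from those votes under any other assignment, and gives every other candidate
nothing from them. Winning under plurality is monotone under such a change of scores. -/

def plScore {C : Type} [DecidableEq C] (E : Multiset (ℕ × List C)) (x : C) : ℕ :=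
  (E.map fun v => if v.2.head? = some x then v.1 else 0).sum

/-- Lower priority value = preferred by the tie-breaking order. -/
def Wins {C : Type} (score : C → ℕ) (prio : C → ℕ) (x : C) : Prop :=
  ∀ y, y ≠ x → score y < score x ∨ (score y = score x ∧ prio x < prio y)

section plScore

variable {C : Type} [DecidableEq C]

lemma plScore_add (E E' : Multiset (ℕ × List C)) (x : C) :
    plScore (E + E') x = plScore E x + plScore E' x := by
  simp [plScore]

lemma plScore_le_sum_fst (E : Multiset (ℕ × List C)) (x : C) :
    plScore E x ≤ (E.map Prod.fst).sum := by
  refine Multiset.sum_map_le_sum_map _ _ fun v _ => ?_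
  split <;> simp

lemma plScore_eq_sum_fst {E : Multiset (ℕ × List C)} {x : C}
    (hE : ∀ v ∈ E, v.2.head? = some x) : plScore E x = (E.map Prod.fst).sum :=
  congrArg Multiset.sum <| Multiset.map_congr rfl fun v hv => if_pos (hE v hv)

lemma plScore_eq_zero {E : Multiset (ℕ × List C)} {x : C}
    (hE : ∀ v ∈ E, v.2.head? ≠ some x) : plScore E x = 0 :=
  Multiset.sum_eq_zero fun _ ha => by
    obtain ⟨v, hv, rfl⟩ := Multiset.mem_map.mp ha
    exact if_neg (hE v hv)

end plScore

theorem Wins.mono {C : Type} {score score' prio : C → ℕ} {p : C}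
    (hwin : Wins score prio p) (hp : score p ≤ score' p)
    (hother : ∀ y, y ≠ p → score' y ≤ score y) : Wins score' prio p := by
  intro y hy
  have hy' := hother y hy
  rcases hwin y hy with hlt | ⟨heq, hprio⟩
  · exact Or.inl (by omega)
  · rcases (show score' y ≤ score' p by omega).lt_or_eq with hlt | heq'
    · exact Or.inl hlt
    · exact Or.inr ⟨heq', hprio⟩

theorem stmt_13_general {C : Type} [DecidableEq C]
    (prio : C → ℕ) (p : C) (F V : Multiset (ℕ × List C))
    (h : ∃ V' : Multiset (ℕ × List C), V'.map Prod.fst = V.map Prod.fst ∧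
      (∀ v ∈ V', v.2.Nodup ∧ ∀ x : C, x ∈ v.2) ∧
      Wins (plScore (F + V')) prio p) :
    ∀ V'' : Multiset (ℕ × List C), V''.map Prod.fst = V.map Prod.fst →
      (∀ v ∈ V'', v.2.Nodup ∧ (∀ x : C, x ∈ v.2) ∧ v.2.head? = some p) →
      Wins (plScore (F + V'')) prio p := by
  obtain ⟨V', hw', -, hwin⟩ := h
  intro V'' hw'' hall
  have hhead : ∀ v ∈ V'', v.2.head? = some p := fun v hv => (hall v hv).2.2
  refine hwin.mono ?_ fun y hy => ?_
  · rw [plScore_add, plScore_add, plScore_eq_sum_fst hhead, hw'', ← hw']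
    exact Nat.add_le_add_left (plScore_le_sum_fst V' p) _
  · have hzero : plScore V'' y = 0 :=
      plScore_eq_zero fun v hv h => hy (Option.some_injective _ (h.symm.trans (hhead v hv)))
    rw [plScore_add, plScore_add, hzero]
    exact Nat.le_add_right _ _

/-- Greedy correctness of frugal bribery for weighted plurality: `F` is the multiset of
unchangeable (non-vulnerable) votes and `V` the multiset of vulnerable votes. If some
assignment of new rankings to the vulnerable votes (keeping their weights) makes `p`
the plurality winner, then every assignment placing `p` first in each vulnerable vote
also makes `p` the winner. -/
theorem stmt_13 {C : Type} [DecidableEq C] [Fintype C]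
    (prio : C → ℕ) (p : C) (F V : Multiset (ℕ × List C))
    (h : ∃ V' : Multiset (ℕ × List C), V'.map Prod.fst = V.map Prod.fst ∧
      (∀ v ∈ V', v.2.Nodup ∧ ∀ x : C, x ∈ v.2) ∧
      Wins (plScore (F + V')) prio p) :
    ∀ V'' : Multiset (ℕ × List C), V''.map Prod.fst = V.map Prod.fst →
      (∀ v ∈ V'', v.2.Nodup ∧ (∀ x : C, x ∈ v.2) ∧ v.2.head? = some p) →
      Wins (plScore (F + V'')) prio p :=
  stmt_13_general prio p F V h
end

section
/- Score realization lemma: Let C = {c₁,…,c_m} ⊎ D with D nonempty, and let α be a normalized score vector of length |C ⊎ D| containing some consecutive gap α_k − α_{k+1} = 1. For any X = (X₁,…,X_m) ∈ ℤ^m, there exists λ ∈ ℝ and a profile of votes such that the α-score of cᵢ equals λ + Xᵢ for all i, and the score of every d ∈ D is strictly less than λ. Moreover the number of votes is polynomial in |C ⊎ D| · ∑ᵢ |Xᵢ|. -/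
/-!
Translating a single vote by every element of the finite group of positions gives every candidate
the same total `∑ p, α p`. If, in one rotated copy, a target `a` and a dummy `b` sitting at positions whose
scores differ by one are swapped, then `a` gains a point over this common value and `b` loses one.
Taking this block `Xᵢ + K + 1` times for each target `cᵢ`, where `K = ∑ᵢ |Xᵢ|` makes all
repetition counts positive, realizes the differences `Xᵢ` above `λ = (common value) + K + 1`,
while no dummy exceeds the common value.
-/

open Finset

lemma Equiv.exists_apply_eq_apply_eq {α β : Type*} [DecidableEq α] [DecidableEq β] (e : α ≃ β)
    {a b : α} {p q : β} (hab : a ≠ b) (hpq : p ≠ q) : ∃ v : α ≃ β, v a = p ∧ v b = q := by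
  set w := e.trans (Equiv.swap (e a) p)
  have hwa : w a = p := by simp [w]
  have hwb : w b ≠ p := hwa ▸ w.injective.ne hab.symm
  refine ⟨w.trans (Equiv.swap (w b) q), ?_, by simp⟩
  simpa [hwa] using Equiv.swap_apply_of_ne_of_ne hwb.symm hpq

variable {C G : Type*}

def score (α : G → ℝ) (c : C) : Multiset (C ≃ G) →+ ℝ :=
  Multiset.sumAddMonoidHom.comp (Multiset.mapAddMonoidHom fun v => α (v c))

lemma score_apply (α : G → ℝ) (c : C) (P : Multiset (C ≃ G)) :
    score α c P = (P.map fun v => α (v c)).sum := rfl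

variable [DecidableEq C] [AddGroup G] [Fintype G] [DecidableEq G]

/-- The cyclic block of `v`, with `a` and `b` exchanged in its unrotated vote. -/
def swapBlock (v : C ≃ G) (a b : C) : Multiset (C ≃ G) :=
  (Equiv.swap a b).trans v ::ₘ (univ.erase 0).val.map fun r => v.trans (Equiv.addRight r)

lemma card_swapBlock (v : C ≃ G) (a b : C) : Multiset.card (swapBlock v a b) = Fintype.card G := by
  simp [swapBlock, Nat.sub_add_cancel Fintype.card_pos]

lemma score_swapBlock (α : G → ℝ) (v : C ≃ G) (a b c : C) :
    score α c (swapBlock v a b) = ∑ p, α p + α (v (Equiv.swap a b c)) - α (v c) := by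
  have hrot : ∑ r ∈ univ.erase 0, α (v c + r) = ∑ p, α p - α (v c) := by
    rw [sum_erase_eq_sub (mem_univ 0), add_zero, ← Equiv.sum_comp (Equiv.addLeft (v c)) α]
    rfl
  simp only [swapBlock, score_apply, Multiset.map_cons, Multiset.sum_cons, Multiset.map_map]
  change α (v (Equiv.swap a b c)) + ∑ r ∈ univ.erase 0, α (v c + r) = _
  rw [hrot]
  ring

lemma score_swapBlock_of_gap {α : G → ℝ} {v : C ≃ G} {a b : C} (hab : a ≠ b)
    (hgap : α (v b) - α (v a) = 1) (c : C) :
    score α c (swapBlock v a b) =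
      ∑ p, α p + (if c = a then 1 else 0) - (if c = b then 1 else 0) := by
  rw [score_swapBlock]
  by_cases hca : c = a
  · rw [hca, Equiv.swap_apply_left, if_pos rfl, if_neg hab]
    linarith
  by_cases hcb : c = b
  · rw [hcb, Equiv.swap_apply_right, if_neg hab.symm, if_pos rfl]
    linarith
  rw [Equiv.swap_apply_of_ne_of_ne hca hcb, if_neg hca, if_neg hcb]
  ring

variable {ι : Type*} [Fintype ι]

def swapProfile (Y : ι → ℕ) (v : ι → C ≃ G) (a : ι → C) (b : C) : Multiset (C ≃ G) :=
  ∑ i, Y i • swapBlock (v i) (a i) b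

lemma card_swapProfile (Y : ι → ℕ) (v : ι → C ≃ G) (a : ι → C) (b : C) :
    Multiset.card (swapProfile Y v a b) = (∑ i, Y i) * Fintype.card G := by
  simp [swapProfile, Multiset.card_sum, card_swapBlock, sum_mul]

section Gap

variable {α : G → ℝ} {v : ι → C ≃ G} {a : ι → C} {b : C}

lemma score_swapProfile (hab : ∀ i, a i ≠ b) (hgap : ∀ i, α (v i b) - α (v i (a i)) = 1)
    (Y : ι → ℕ) (c : C) :
    score α c (swapProfile Y v a b) =
      ∑ i, (Y i : ℝ) * (∑ p, α p + (if c = a i then 1 else 0) - (if c = b then 1 else 0)) := by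
  simp only [swapProfile, map_sum, map_nsmul, nsmul_eq_mul,
    score_swapBlock_of_gap (hab _) (hgap _)]

lemma score_swapProfile_target (ha : Function.Injective a) (hab : ∀ i, a i ≠ b)
    (hgap : ∀ i, α (v i b) - α (v i (a i)) = 1) (Y : ι → ℕ) (i : ι) :
    score α (a i) (swapProfile Y v a b) = (∑ k, (Y k : ℝ)) * ∑ p, α p + Y i := by
  classical
  simp only [score_swapProfile hab hgap, if_neg (hab i), ha.eq_iff, sub_zero, mul_add, mul_ite,
    mul_one, mul_zero, sum_add_distrib, sum_mul, sum_ite_eq, mem_univ, if_true]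

lemma score_swapProfile_le (hab : ∀ i, a i ≠ b) (hgap : ∀ i, α (v i b) - α (v i (a i)) = 1)
    (Y : ι → ℕ) {c : C} (hc : ∀ i, c ≠ a i) :
    score α c (swapProfile Y v a b) ≤ (∑ k, (Y k : ℝ)) * ∑ p, α p := by
  rw [score_swapProfile hab hgap, sum_mul]
  refine sum_le_sum fun i _ => mul_le_mul_of_nonneg_left ?_ (Nat.cast_nonneg _)
  rw [if_neg (hc i)]
  split_ifs <;> linarith

end Gap

lemma exists_natCast_eq_add_sum_natAbs_add_one {ι : Type*} [Fintype ι] (X : ι → ℤ) :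
    ∃ Y : ι → ℕ, ∀ i, (Y i : ℤ) = X i + ∑ k, (X k).natAbs + 1 ∧
      Y i ≤ 2 * (∑ k, (X k).natAbs + 1) := by
  refine ⟨fun i => (X i + ∑ k, (X k).natAbs + 1).toNat, fun i => ?_⟩
  have hXi : (X i).natAbs ≤ ∑ k, (X k).natAbs :=
    single_le_sum (f := fun k => (X k).natAbs) (fun k _ => Nat.zero_le _) (mem_univ i)
  dsimp only
  omega

/-- Score realization lemma (Lemma 4 / Baumeister et al. Lemma 4.2). Candidates are
`C = Fin m ⊕ Fin d` with `d ≥ 1` dummy candidates; a vote is a bijection from candidates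
to the `m + d` positions, and a candidate at position `i` receives `α i` points. If `α`
is a normalized score vector (non-increasing, with a consecutive unit gap
`α j - α (j+1) = 1` and zeros afterwards), then for every integer vector `X` there are a
real `λ` and a profile of votes realizing score `λ + Xᵢ` for each `cᵢ` and score strictly
below `λ` for every dummy, using a number of votes polynomial in `(m + d)` and `∑ᵢ |Xᵢ|`. -/
theorem stmt_16 (m d : ℕ) (hd : 0 < d) (α : Fin (m + d) → ℝ)
    (j : ℕ) (hj : j + 1 < m + d)
    (hgap : α ⟨j, by omega⟩ - α ⟨j + 1, hj⟩ = 1)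
    (X : Fin m → ℤ) :
    ∃ (P : Multiset ((Fin m ⊕ Fin d) ≃ Fin (m + d))) (lam : ℝ),
      (∀ i : Fin m, (P.map fun v => α (v (Sum.inl i))).sum = lam + (X i : ℝ)) ∧
      (∀ e : Fin d, (P.map fun v => α (v (Sum.inr e))).sum < lam) ∧
      Multiset.card P ≤ 4 * (m + d) ^ 2 * ((∑ i : Fin m, (X i).natAbs) + 1) := by
  have : NeZero (m + d) := ⟨by omega⟩
  set dummy : Fin m ⊕ Fin d := Sum.inr ⟨0, hd⟩
  have hpos : (⟨j + 1, hj⟩ : Fin (m + d)) ≠ ⟨j, by omega⟩ := by simp [Fin.ext_iff]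
  choose v hv using fun i : Fin m =>
    finSumFinEquiv.exists_apply_eq_apply_eq (Sum.inl_ne_inr : Sum.inl i ≠ dummy) hpos
  have hvgap : ∀ i, α (v i dummy) - α (v i (Sum.inl i)) = 1 := fun i => by
    rw [(hv i).1, (hv i).2, hgap]
  obtain ⟨Y, hY⟩ := exists_natCast_eq_add_sum_natAbs_add_one X
  set K := ∑ i, (X i).natAbs
  refine ⟨swapProfile Y v Sum.inl dummy, (∑ i, (Y i : ℝ)) * ∑ p, α p + (K + 1),
    fun i => ?_, fun e => ?_, ?_⟩
  · rw [← score_apply, score_swapProfile_target Sum.inl_injective (fun _ => Sum.inl_ne_inr) hvgap]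
    have hYi : (Y i : ℝ) = X i + K + 1 := by exact_mod_cast (hY i).1
    rw [hYi]
    ring
  · have := score_swapProfile_le (fun _ => Sum.inl_ne_inr) hvgap Y
      (fun i => (Sum.inl_ne_inr (a := i) (b := e)).symm)
    rw [score_apply] at this
    linarith [(by positivity : (0 : ℝ) < K + 1)]
  · have hsum : ∑ i, Y i ≤ m * (2 * (K + 1)) := by
      simpa using sum_le_card_nsmul univ Y _ fun i _ => (hY i).2
    rw [card_swapProfile, Fintype.card_fin]
    calc (∑ i, Y i) * (m + d) ≤ (m + d) * (2 * (K + 1)) * (m + d) := by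
          gcongr; exact hsum.trans (by gcongr; omega)
      _ ≤ 4 * (m + d) ^ 2 * (K + 1) := by nlinarith [Nat.zero_le ((m + d) ^ 2 * (K + 1))]
end

section
/- In the Borda Frugal-Bribery reduction, the forward direction holds: if I ⊆ [t] with |I| = m/3 indexes an exact 3-set cover of U (i.e., the sets Sᵢ, i ∈ I, partition U), then replacing each vote vᵢ¹ (i ∈ I) of the form p ≻ D ≻ (U∖Sᵢ) ≻ c ≻ z ≻ Sᵢ with p ≻ D ≻ (U∖Sᵢ) ≻ z ≻ Sᵢ ≻ c decreases c's total Borda score by 4m/3, increases z's total score by m/3, and increases each u ∈ U's score by exactly 1, leaving p's and D's scores unchanged. -/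
/-!
Both votes share the prefix `P = p ≻ D ≻ (U ∖ Sᵢ)`, and the new vote arises from the old one
`P ++ c :: T`, with `T = z ≻ Sᵢ`, by sinking `c` to the bottom: `c` falls `|T| = 4` places,
every member of `T` rises one place, and `P` is untouched. Since the `Sᵢ` (`i ∈ I`) partition
`U`, each `u ∈ U` lies in `T` for exactly one of the `|I| = m / 3` changed votes.
-/

namespace List

variable {α : Type*} [DecidableEq α] {P T : List α} {c x : α}

theorem idxOf_append_concat_of_mem_left (hx : x ∈ P) :
    (P ++ T ++ [c]).idxOf x = (P ++ c :: T).idxOf x := by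
  rw [append_assoc, idxOf_append_of_mem hx, idxOf_append_of_mem hx]

theorem idxOf_append_concat_self (h : (P ++ c :: T).Nodup) :
    (P ++ T ++ [c]).idxOf c = (P ++ c :: T).idxOf c + T.length := by
  have hcP : c ∉ P := fun hc => (nodup_append.1 h).2.2 c hc c mem_cons_self rfl
  have hcT : c ∉ T := (nodup_cons.1 (nodup_append.1 h).2.1).1
  rw [idxOf_append_of_notMem (by simpa using ⟨hcP, hcT⟩), idxOf_append_of_notMem hcP,
    idxOf_cons_self, length_append, idxOf_cons_self]
  simp

theorem idxOf_append_cons_of_mem_right (h : (P ++ c :: T).Nodup) (hx : x ∈ T) :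
    (P ++ c :: T).idxOf x = (P ++ T ++ [c]).idxOf x + 1 := by
  have hxP : x ∉ P := fun hx' => (nodup_append.1 h).2.2 x hx' x (mem_cons_of_mem c hx) rfl
  have hxc : x ≠ c := fun e => (nodup_cons.1 (nodup_append.1 h).2.1).1 (e ▸ hx)
  rw [idxOf_append_of_notMem hxP, append_assoc, idxOf_append_of_notMem hxP,
    idxOf_cons_ne _ (Ne.symm hxc), idxOf_append_of_mem hx]
  omega

theorem filter_notMem_append_perm {S U : List α} (hS : S.Nodup) (hU : U.Nodup)
    (hSU : ∀ u ∈ S, u ∈ U) : (U.filter (fun u => decide (u ∉ S)) ++ S).Perm U := by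
  have hS' : S.Perm (U.filter fun u => decide (u ∈ S)) :=
    (perm_ext_iff_of_nodup hS (hU.filter _)).2 fun a => by
      simpa using fun ha => hSU a ha
  refine (hS'.append_left _).trans ?_
  simpa using filter_append_perm (fun u => !decide (u ∈ S)) U

end List

theorem Finset.sum_sub_eq_sum_sub_add_sum {ι : Type*} {I : Finset ι} (n : ℤ) {a b : ι → ℕ}
    {d : ι → ℤ} (h : ∀ i ∈ I, (a i : ℤ) = b i + d i) :
    ∑ i ∈ I, (n - b i) = ∑ i ∈ I, (n - a i) + ∑ i ∈ I, d i := by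
  rw [← Finset.sum_add_distrib]
  exact Finset.sum_congr rfl fun i hi => by rw [h i hi]; ring

theorem Finset.sum_count_eq_one_of_sum_coe_eq {ι α : Type*} [DecidableEq α] {I : Finset ι}
    {S : ι → List α} {U : List α} (hU : U.Nodup) (hpart : ∑ i ∈ I, (S i : Multiset α) = U)
    {u : α} (hu : u ∈ U) : ∑ i ∈ I, (S i).count u = 1 := by
  have h := Multiset.count_sum' (s := I) (a := u) (f := fun i => (S i : Multiset α))
  rw [hpart] at h
  simpa [List.count_eq_one_of_mem hU hu] using h.symm

open List in
theorem nodup_reductionVote {α : Type*} [DecidableEq α] {p c z : α} {Dl Ul S : List α}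
    (hframe : (p :: (Dl ++ Ul ++ [c, z])).Nodup) (hS : S.Nodup) (hSU : ∀ u ∈ S, u ∈ Ul) :
    (p :: (Dl ++ Ul.filter (fun u => decide (u ∉ S))) ++ c :: z :: S).Nodup := by
  have hUl : Ul.Nodup :=
    hframe.of_cons.sublist ((sublist_append_right _ _).trans (sublist_append_left _ _))
  refine (Perm.nodup_iff ?_).2 hframe
  have hF := filter_notMem_append_perm hS hUl hSU
  calc p :: (Dl ++ Ul.filter (fun u => decide (u ∉ S))) ++ c :: z :: S
      = p :: (Dl ++ Ul.filter (fun u => decide (u ∉ S)) ++ ([c, z] ++ S)) := by simp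
    _ ~ p :: (Dl ++ Ul.filter (fun u => decide (u ∉ S)) ++ (S ++ [c, z])) :=
        (perm_append_comm.append_left _).cons p
    _ = p :: (Dl ++ (Ul.filter (fun u => decide (u ∉ S)) ++ S) ++ [c, z]) := by simp
    _ ~ p :: (Dl ++ Ul ++ [c, z]) := ((hF.append_left Dl).append_right _).cons p

theorem stmt_17_general {C : Type} [DecidableEq C] {ι : Type}
    (m : ℕ)
    (p c z : C) (Dl Ul : List C) (I : Finset ι) (Sl : ι → List C)
    (hframe : (p :: (Dl ++ Ul ++ [c, z])).Nodup)
    (hI : I.card = m / 3)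
    (hSl : ∀ i ∈ I, (Sl i).Nodup ∧ (Sl i).length = 3 ∧ ∀ u ∈ Sl i, u ∈ Ul)
    (hpart : (∑ i ∈ I, ((Sl i : Multiset C))) = (Ul : Multiset C)) :
    let N : ℤ := 6 * m + 3
    let oldV : ι → List C := fun i =>
      p :: (Dl ++ (Ul.filter fun u => decide (u ∉ Sl i)) ++ [c] ++ [z] ++ Sl i)
    let newV : ι → List C := fun i =>
      p :: (Dl ++ (Ul.filter fun u => decide (u ∉ Sl i)) ++ [z] ++ Sl i ++ [c])
    let oldS : C → ℤ := fun x => ∑ i ∈ I, (N - 1 - ((oldV i).idxOf x : ℤ))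
    let newS : C → ℤ := fun x => ∑ i ∈ I, (N - 1 - ((newV i).idxOf x : ℤ))
    newS c = oldS c - 4 * ((m / 3 : ℕ) : ℤ) ∧
    newS z = oldS z + ((m / 3 : ℕ) : ℤ) ∧
    (∀ u ∈ Ul, newS u = oldS u + 1) ∧
    newS p = oldS p ∧
    (∀ dd ∈ Dl, newS dd = oldS dd) := by
  intro N oldV newV oldS newS
  have hUl : Ul.Nodup :=
    hframe.of_cons.sublist ((List.sublist_append_right _ _).trans (List.sublist_append_left _ _))
  set P : ι → List C := fun i => p :: (Dl ++ Ul.filter fun u => decide (u ∉ Sl i))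
  have hold (i : ι) : oldV i = P i ++ c :: z :: Sl i := by simp [oldV, P]
  have hnew (i : ι) : newV i = P i ++ (z :: Sl i) ++ [c] := by simp [newV, P]
  have hnd (i : ι) (hi : i ∈ I) : (P i ++ c :: z :: Sl i).Nodup :=
    nodup_reductionVote hframe (hSl i hi).1 (hSl i hi).2.2
  have hshift (x : C) (d : ι → ℤ)
      (h : ∀ i ∈ I, ((oldV i).idxOf x : ℤ) = (newV i).idxOf x + d i) :
      newS x = oldS x + ∑ i ∈ I, d i :=
    Finset.sum_sub_eq_sum_sub_add_sum _ h
  have hstay (x : C) (hx : ∀ i ∈ I, x ∈ P i) : newS x = oldS x := by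
    simpa using hshift x 0 fun i hi => by
      rw [hold, hnew, List.idxOf_append_concat_of_mem_left (hx i hi)]; simp
  refine ⟨?_, ?_, fun u hu => ?_, hstay p fun i _ => by simp [P],
    fun dd hdd => hstay dd fun i _ => by simp [P, hdd]⟩
  · rw [hshift c (fun _ => -4) fun i hi => by
      rw [hold, hnew, List.idxOf_append_concat_self (hnd i hi), List.length_cons, (hSl i hi).2.1]
      push_cast; ring]
    simp [hI]; ring
  · rw [hshift z (fun _ => 1) fun i hi => by
      rw [hold, hnew, List.idxOf_append_cons_of_mem_right (hnd i hi) List.mem_cons_self]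
      push_cast; ring]
    simp [hI]
  · rw [hshift u (fun i => (Sl i).count u) fun i hi => ?_, ← Nat.cast_sum,
      Finset.sum_count_eq_one_of_sum_coe_eq hUl hpart hu, Nat.cast_one]
    by_cases hui : u ∈ Sl i
    · rw [hold, hnew, List.idxOf_append_cons_of_mem_right (hnd i hi) (List.mem_cons_of_mem z hui),
        List.count_eq_one_of_mem (hSl i hi).1 hui]
      push_cast; ring
    · rw [hold, hnew, List.idxOf_append_concat_of_mem_left (by simp [P, hu, hui]),
        List.count_eq_zero_of_not_mem hui]
      simp

/-- Forward direction of the Borda `Frugal-Bribery` reduction. The candidate set is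
`{p} ∪ D ∪ U ∪ {c, z}` with `|D| = 5m`, `|U| = m` (listed in fixed orders `Dl`, `Ul`),
so there are `N = 6m + 3` candidates and the Borda score of the candidate at (0-indexed)
position `i` of a vote is `N - 1 - i`. For every `i` in the index set `I` (of size `m/3`,
indexing an exact 3-set cover `{Sl i}` of `U`), the original vote
`p ≻ D ≻ (U ∖ Sᵢ) ≻ c ≻ z ≻ Sᵢ` is replaced by `p ≻ D ≻ (U ∖ Sᵢ) ≻ z ≻ Sᵢ ≻ c`.
Then, over this block of votes, `c`'s total Borda score decreases by `4m/3`, `z`'s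
increases by `m/3`, each `u ∈ U` gains exactly `1`, and the scores of `p` and of every
member of `D` are unchanged. -/
theorem stmt_17 {C : Type} [DecidableEq C] {ι : Type} [DecidableEq ι]
    (m : ℕ) (hm : 0 < m) (hm3 : 3 ∣ m)
    (p c z : C) (Dl Ul : List C) (I : Finset ι) (Sl : ι → List C)
    (hDlen : Dl.length = 5 * m) (hUlen : Ul.length = m)
    (hframe : (p :: (Dl ++ Ul ++ [c, z])).Nodup)
    (hI : I.card = m / 3)
    (hSl : ∀ i ∈ I, (Sl i).Nodup ∧ (Sl i).length = 3 ∧ ∀ u ∈ Sl i, u ∈ Ul)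
    (hpart : (∑ i ∈ I, ((Sl i : Multiset C))) = (Ul : Multiset C)) :
    let N : ℤ := 6 * m + 3
    let oldV : ι → List C := fun i =>
      p :: (Dl ++ (Ul.filter fun u => decide (u ∉ Sl i)) ++ [c] ++ [z] ++ Sl i)
    let newV : ι → List C := fun i =>
      p :: (Dl ++ (Ul.filter fun u => decide (u ∉ Sl i)) ++ [z] ++ Sl i ++ [c])
    let oldS : C → ℤ := fun x => ∑ i ∈ I, (N - 1 - ((oldV i).idxOf x : ℤ))
    let newS : C → ℤ := fun x => ∑ i ∈ I, (N - 1 - ((newV i).idxOf x : ℤ))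
    newS c = oldS c - 4 * ((m / 3 : ℕ) : ℤ) ∧
    newS z = oldS z + ((m / 3 : ℕ) : ℤ) ∧
    (∀ u ∈ Ul, newS u = oldS u + 1) ∧
    newS p = oldS p ∧
    (∀ dd ∈ Dl, newS dd = oldS dd) :=
  stmt_17_general m p c z Dl Ul I Sl hframe hI hSl hpart
end

section
/- In the k-approval Frugal-$Bribery reduction (k ≥ 5), the score-counting step holds: in any collection of votes of the form p ≻ q ≻ Sᵢ ≻ D ≻ others (with |Sᵢ| = 3, |D| = k−1, so both p and q are approved and each element of Sᵢ is approved), if exactly m/3 of these votes are changed so that q is no longer among the top k in each changed vote — and additionally the sets Sᵢ corresponding to the changed votes do not cover U — then there is a candidate x ∈ U whose k-approval score from these votes is unchanged. -/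
open Finset

theorem approvalScore_le_of_eqOn_compl {C ι : Type} [DecidableEq C] [Fintype ι]
    (A B : ι → Finset C) (J : Finset ι) (x : C)
    (hBeq : ∀ i ∉ J, B i = A i) (hxA : ∀ i ∈ J, x ∉ A i) :
    (∑ i : ι, if x ∈ A i then 1 else 0) ≤ ∑ i : ι, if x ∈ B i then 1 else 0 := by
  refine sum_le_sum fun i _ => ?_
  by_cases hiJ : i ∈ J
  · simp [hxA i hiJ]
  · rw [hBeq i hiJ]

theorem notMem_insert_insert_union {C : Type} [DecidableEq C] {p q x : C}
    {U D S T : Finset C} (hxU : x ∈ U) (hpU : p ∉ U) (hqU : q ∉ U) (hUD : Disjoint U D)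
    (hxS : x ∉ S) (hT : T ⊆ D) :
    x ∉ insert p (insert q (S ∪ T)) := by
  simp only [mem_insert, mem_union, not_or]
  exact ⟨fun h => hpU (h ▸ hxU), fun h => hqU (h ▸ hxU), hxS,
    fun h => disjoint_left.mp hUD hxU (hT h)⟩

theorem stmt_18_general {C : Type} [DecidableEq C] {ι : Type} [Fintype ι]
    (k : ℕ) (p q : C) (U D : Finset C)
    (hpU : p ∉ U) (hqU : q ∉ U) (hUD : Disjoint U D)
    (S T : ι → Finset C) (hT : ∀ i, T i ⊆ D)
    (A : ι → Finset C) (hA : ∀ i, A i = insert p (insert q (S i ∪ T i)) ∧ (A i).card = k)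
    (J : Finset ι)
    (B : ι → Finset C)
    (hBeq : ∀ i ∉ J, B i = A i)
    (hcov : ¬ U ⊆ J.biUnion S) :
    ∃ x ∈ U, (∑ i : ι, if x ∈ A i then 1 else 0) ≤ ∑ i : ι, if x ∈ B i then 1 else 0 := by
  obtain ⟨x, hxU, hxJ⟩ := not_subset.mp hcov
  simp only [mem_biUnion, not_exists, not_and] at hxJ
  refine ⟨x, hxU, approvalScore_le_of_eqOn_compl A B J x hBeq fun i hi => ?_⟩
  rw [(hA i).1]
  exact notMem_insert_insert_union hxU hpU hqU hUD (hxJ i hi) (hT i)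

/-- Score-counting step of the `k`-approval `Frugal-$Bribery` reduction (`k ≥ 5`).
A `k`-approval vote is identified with its approved set of `k` candidates. Originally
vote `i` approves `A i = {p, q} ∪ S i ∪ T i` with `S i ⊆ U` of size `3` and `T i ⊆ D`.
Exactly the votes indexed by `J` (with `|J| = |U| / 3`) are changed, to arbitrary
approved sets `B i` of size `k` that no longer contain `q`. If the sets `S i` for
`i ∈ J` do not cover `U`, then there is a candidate `x ∈ U` whose `k`-approval score
from this block of votes does not decrease (it is unchanged on unchanged votes and `x`
is approved by no original changed vote). -/
theorem stmt_18 {C : Type} [DecidableEq C] {ι : Type} [Fintype ι] [DecidableEq ι]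
    (k : ℕ) (hk : 5 ≤ k) (p q : C) (U D : Finset C)
    (hpU : p ∉ U) (hqU : q ∉ U) (hUD : Disjoint U D) (hpq : p ≠ q)
    (S T : ι → Finset C) (hS : ∀ i, S i ⊆ U ∧ (S i).card = 3) (hT : ∀ i, T i ⊆ D)
    (A : ι → Finset C) (hA : ∀ i, A i = insert p (insert q (S i ∪ T i)) ∧ (A i).card = k)
    (J : Finset ι) (hJ : J.card = U.card / 3)
    (B : ι → Finset C) (hB : ∀ i ∈ J, (B i).card = k ∧ q ∉ B i)
    (hBeq : ∀ i ∉ J, B i = A i)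
    (hcov : ¬ U ⊆ J.biUnion S) :
    ∃ x ∈ U, (∑ i : ι, if x ∈ A i then 1 else 0) ≤ ∑ i : ι, if x ∈ B i then 1 else 0 :=
  stmt_18_general k p q U D hpU hqU hUD S T hT A hA J B hBeq hcov
end
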